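/- If a bipartite graph G = (U ∪ V, E) with |U| = m, |V| = n is an intersection graph of horizontal segments (for U) and vertical upward rays (for V) in the plane and contains no K_{k,k}, then |E| ≤ 2(m+n)(k-1). -/

import Mathlib

/-!
Let `v₀` be the ray with the highest starting point. Every ray starts below every segment
meeting `v₀`, so such a segment meets exactly the rays whose abscissa lies in its span.
If all degrees exceeded `2(k-1)`, then among the more than `2(k-1)` segments meeting `v₀`,
at least `k` would have `k` neighbours on the same side of `v₀`, say the right. These `k`
segments and `k` right neighbours of the one with the leftmost right end span a `K_{k,k}`.
Hence every induced subgraph has a vertex of degree at most `2(k-1)`, and deleting such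
vertices one at a time gives the edge bound.
-/

open Finset

variable {α β : Type*}

lemma exists_biclique_card_eq {r : α → β → Prop} {k : ℕ} {U : Finset α} {V : Finset β}
    (hU : k ≤ #U) (hV : k ≤ #V) (h : ∀ u ∈ U, ∀ v ∈ V, r u v) :
    ∃ (U' : Finset α) (V' : Finset β), #U' = k ∧ #V' = k ∧ ∀ u ∈ U', ∀ v ∈ V', r u v := by
  obtain ⟨U', hU'U, hU'⟩ := exists_subset_card_eq hU
  obtain ⟨V', hV'V, hV'⟩ := exists_subset_card_eq hV
  exact ⟨U', V', hU', hV', fun u hu v hv => h u (hU'U hu) v (hV'V hv)⟩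

lemma le_card_filter_or_le_card_filter_not {s : Finset α} {k : ℕ} (h : 2 * (k - 1) < #s)
    (p : α → Prop) [DecidablePred p] : k ≤ #{x ∈ s | p x} ∨ k ≤ #{x ∈ s | ¬ p x} := by
  have := card_filter_add_card_filter_not (s := s) fun x => p x
  omega

theorem sum_card_bipartiteAbove_le_of_exists_degree_le {r : α → β → Prop}
    [∀ a b, Decidable (r a b)] {d : ℕ}
    (h : ∀ (s : Finset α) (t : Finset β), s.Nonempty → t.Nonempty →
      (∃ a ∈ s, #(t.bipartiteAbove r a) ≤ d) ∨ ∃ b ∈ t, #(s.bipartiteBelow r b) ≤ d)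
    (s : Finset α) (t : Finset β) :
    ∑ a ∈ s, #(t.bipartiteAbove r a) ≤ d * (#s + #t) := by
  classical
  induction hN : #s + #t using Nat.strong_induction_on generalizing s t with
  | _ N ih =>
  subst hN
  rcases s.eq_empty_or_nonempty with rfl | hs
  · simp
  rcases t.eq_empty_or_nonempty with rfl | ht
  · simp [bipartiteAbove]
  rcases h s t hs ht with ⟨a, ha, hda⟩ | ⟨b, hb, hdb⟩
  · have hcard := card_erase_add_one ha
    have hrest := ih _ (by omega) (s.erase a) t rfl
    calc ∑ x ∈ s, #(t.bipartiteAbove r x)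
        = ∑ x ∈ s.erase a, #(t.bipartiteAbove r x) + #(t.bipartiteAbove r a) :=
          (sum_erase_add _ _ ha).symm
      _ ≤ d * (#(s.erase a) + #t) + d := add_le_add hrest hda
      _ = d * (#s + #t) := by rw [← hcard]; ring
  · have hcard := card_erase_add_one hb
    have hrest := ih _ (by omega) s (t.erase b) rfl
    rw [sum_card_bipartiteAbove_eq_sum_card_bipartiteBelow] at hrest ⊢
    calc ∑ y ∈ t, #(s.bipartiteBelow r y)
        = ∑ y ∈ t.erase b, #(s.bipartiteBelow r y) + #(s.bipartiteBelow r b) :=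
          (sum_erase_add _ _ hb).symm
      _ ≤ d * (#s + #(t.erase b)) + d := add_le_add hrest hdb
      _ = d * (#s + #t) := by rw [← hcard]; ring

lemma Set.Icc_prod_singleton_inter_singleton_prod_Ici_nonempty_iff {X Y : Type*} [Preorder X]
    [Preorder Y] {a b x : X} {y e : Y} :
    ((Set.Icc a b ×ˢ {y}) ∩ ({x} ×ˢ Set.Ici e)).Nonempty ↔ x ∈ Set.Icc a b ∧ e ≤ y := by
  simp only [Set.prod_inter_prod, Set.prod_nonempty_iff, Set.inter_singleton_nonempty,
    Set.singleton_inter_nonempty, Set.mem_Ici]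

section SegmentsAndRays

variable {X Y : Type*} [LinearOrder X] [LinearOrder Y] {sa sb : α → X} {sy : α → Y}
  {rx : β → X} {ry : β → Y} {A : α → β → Prop} [∀ u v, Decidable (A u v)] {k : ℕ}

theorem exists_card_bipartiteAbove_le_or_card_bipartiteBelow_le
    (hA : ∀ u v, A u v ↔ rx v ∈ Set.Icc (sa u) (sb u) ∧ ry v ≤ sy u)
    (hK : ¬ ∃ (U : Finset α) (V : Finset β), #U = k ∧ #V = k ∧ ∀ u ∈ U, ∀ v ∈ V, A u v)
    (s : Finset α) {t : Finset β} (ht : t.Nonempty) :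
    (∃ u ∈ s, #(t.bipartiteAbove A u) ≤ 2 * (k - 1)) ∨
      ∃ v ∈ t, #(s.bipartiteBelow A v) ≤ 2 * (k - 1) := by
  by_contra! hdeg
  obtain ⟨hdeg_s, hdeg_t⟩ := hdeg
  have hk : 0 < k := Nat.pos_of_ne_zero (by rintro rfl; exact hK ⟨∅, ∅, by simp⟩)
  obtain ⟨v₀, hv₀, hv₀_top⟩ := t.exists_max_image ry ht
  have hmeet : ∀ u ∈ s.bipartiteBelow A v₀, sa u ≤ rx v₀ ∧ rx v₀ ≤ sb u ∧ ry v₀ ≤ sy u :=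
    fun u hu => by
      obtain ⟨⟨h₁, h₂⟩, h₃⟩ := (hA u v₀).1 ((mem_bipartiteBelow A).1 hu).2
      exact ⟨h₁, h₂, h₃⟩
  rcases le_card_filter_or_le_card_filter_not (hdeg_t v₀ hv₀)
    (fun u => k ≤ #{v ∈ t.bipartiteAbove A u | rx v₀ ≤ rx v}) with hR | hL
  · obtain ⟨w, hw, hw_min⟩ := exists_min_image _ sb (card_pos.1 (hk.trans_le hR))
    refine hK (exists_biclique_card_eq hR (mem_filter.1 hw).2 fun u hu v hv => ?_)
    obtain ⟨hv, hv_right⟩ := mem_filter.1 hv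
    obtain ⟨hvt, hwv⟩ := (mem_bipartiteAbove A).1 hv
    obtain ⟨⟨-, hvw⟩, -⟩ := (hA w v).1 hwv
    obtain ⟨hu₁, -, hu₃⟩ := hmeet u (mem_filter.1 hu).1
    exact (hA u v).2 ⟨⟨hu₁.trans hv_right, hvw.trans (hw_min u hu)⟩, (hv₀_top v hvt).trans hu₃⟩
  · obtain ⟨w, hw, hw_max⟩ := exists_max_image _ sa (card_pos.1 (hk.trans_le hL))
    obtain ⟨hw₀, hw_poor⟩ := mem_filter.1 hw
    have hw_left := (le_card_filter_or_le_card_filter_not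
      (hdeg_s w ((mem_bipartiteBelow A).1 hw₀).1) _).resolve_left hw_poor
    refine hK (exists_biclique_card_eq hL hw_left fun u hu v hv => ?_)
    obtain ⟨hv, hv_left⟩ := mem_filter.1 hv
    obtain ⟨hvt, hwv⟩ := (mem_bipartiteAbove A).1 hv
    obtain ⟨⟨hwv₁, -⟩, -⟩ := (hA w v).1 hwv
    obtain ⟨-, hu₂, hu₃⟩ := hmeet u (mem_filter.1 hu).1
    exact (hA u v).2 ⟨⟨(hw_max u hu).trans hwv₁, (not_le.1 hv_left).le.trans hu₂⟩,
      (hv₀_top v hvt).trans hu₃⟩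

end SegmentsAndRays

/-- If the bipartite intersection graph of `m` horizontal segments and `n` vertical
upward rays in the plane contains no `K_{k,k}`, then it has at most `2(m+n)(k-1)` edges. -/
theorem stmt_6 {m n k : ℕ} (sa sb sy : Fin m → ℝ) (rx ry : Fin n → ℝ)
    (A : Fin m → Fin n → Prop)
    (hA : ∀ u v, A u v ↔
      ((Set.Icc (sa u) (sb u) ×ˢ ({sy u} : Set ℝ)) ∩
        (({rx v} : Set ℝ) ×ˢ Set.Ici (ry v))).Nonempty)
    (hK : ¬ ∃ (U : Finset (Fin m)) (V : Finset (Fin n)), U.card = k ∧ V.card = k ∧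
      ∀ u ∈ U, ∀ v ∈ V, A u v) :
    {q : Fin m × Fin n | A q.1 q.2}.ncard ≤ 2 * (m + n) * (k - 1) := by
  classical
  have hA' : ∀ u v, A u v ↔ rx v ∈ Set.Icc (sa u) (sb u) ∧ ry v ≤ sy u := fun u v =>
    (hA u v).trans Set.Icc_prod_singleton_inter_singleton_prod_Ici_nonempty_iff
  have hbound := sum_card_bipartiteAbove_le_of_exists_degree_le
    (fun s _ _ ht => exists_card_bipartiteAbove_le_or_card_bipartiteBelow_le hA' hK s ht)
    univ univ
  calc {q : Fin m × Fin n | A q.1 q.2}.ncard = ∑ u, #(univ.bipartiteAbove A u) := by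
        simp only [Set.ncard_eq_toFinset_card', Set.toFinset_ofPred, card_filter,
          Fintype.sum_prod_type, bipartiteAbove]
    _ ≤ 2 * (k - 1) * (m + n) := by simpa using hbound
    _ = 2 * (m + n) * (k - 1) := by ring
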